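/- arXiv:1909.10118 — 6 statements merged into one kernel-verified Lean document; each statement's English description precedes it below -/
import Mathlib

section
/- If P is a complex polynomial of degree n ≥ 1 having all its zeros in the closed unit disk D = {z : |z| ≤ 1}, then the sup norm of P' on D is at least (n/2) times the sup norm of P on D. -/
/-!
On the unit circle, the logarithmic derivative of `P = a ∏ (X - r)` gives
`z P'(z) / P(z) = ∑ z / (z - r)`, and each term has real part at least `1/2` when `|z| = 1` and
`|r| ≤ 1`. Hence `|P'(z)| ≥ (n/2) |P(z)|` at every point of the circle, in particular at a point
where `|P|` attains its maximum over the disk (maximum modulus principle).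
-/

open Polynomial Set

namespace Complex

theorem one_half_le_re_div_sub {z r : ℂ} (hz : ‖z‖ = 1) (hr : ‖r‖ ≤ 1) (hzr : z ≠ r) :
    1 / 2 ≤ (z / (z - r)).re := by
  have hpos : 0 < normSq (z - r) := normSq_pos.2 (sub_ne_zero.2 hzr)
  have hz2 : normSq z = 1 := by rw [← Complex.sq_norm, hz, one_pow]
  have hr2 : normSq r ≤ 1 := by rw [← Complex.sq_norm]; nlinarith [norm_nonneg r]
  rw [normSq_apply] at hz2 hr2
  -- `|z - r|² = 1 - 2 Re(z r̄) + |r|² ≤ 2 Re(z (z̄ - r̄))`, twice the numerator of the real part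
  rw [div_re, ← add_div, le_div_iff₀ hpos]
  simp only [normSq_apply, sub_re, sub_im]
  nlinarith

theorem exists_norm_eq_one_isMaxOn_closedBall {F : Type*} [NormedAddCommGroup F]
    [NormedSpace ℂ F] {f : ℂ → F} (hf : DiffContOnCl ℂ f (Metric.ball 0 1)) :
    ∃ z : ℂ, ‖z‖ = 1 ∧ IsMaxOn (norm ∘ f) (Metric.closedBall 0 1) z := by
  obtain ⟨z, hz, hmax⟩ := exists_mem_frontier_isMaxOn_norm Metric.isBounded_ball
    (Metric.nonempty_ball.2 one_pos) hf
  rw [frontier_ball 0 one_ne_zero, mem_sphere_zero_iff_norm] at hz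
  rw [closure_ball 0 one_ne_zero] at hmax
  exact ⟨z, hz, hmax⟩

end Complex

theorem IsCompact.le_ciSup_of_continuousOn {X : Type*} [TopologicalSpace X] {K : Set X}
    (hK : IsCompact K) {f : X → ℝ} (hf : ContinuousOn f K) {x : X} (hx : x ∈ K) :
    f x ≤ ⨆ y : K, f y :=
  le_ciSup (f := fun y : K ↦ f y) (by simpa only [image_eq_range] using hK.bddAbove_image hf)
    ⟨x, hx⟩

namespace Polynomial

theorem natDegree_div_two_mul_norm_eval_le_norm_eval_derivative {P : ℂ[X]} {z : ℂ}
    (hz : ‖z‖ = 1) (hroots : ∀ r : ℂ, P.IsRoot r → ‖r‖ ≤ 1) :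
    (P.natDegree / 2 : ℝ) * ‖P.eval z‖ ≤ ‖(derivative P).eval z‖ := by
  by_cases hPz : P.eval z = 0
  · simp [hPz]
  have hre : (P.natDegree / 2 : ℝ) ≤ (P.roots.map fun r ↦ z / (z - r)).sum.re :=
    calc (P.natDegree / 2 : ℝ) = (P.roots.map fun _ ↦ (1 / 2 : ℝ)).sum := by
          simp only [Multiset.map_const', Multiset.sum_replicate, nsmul_eq_mul,
            IsAlgClosed.card_roots_eq_natDegree]
          ring
      _ ≤ (P.roots.map fun r ↦ (z / (z - r)).re).sum := by
          refine Multiset.sum_map_le_sum_map _ _ fun r hr ↦ ?_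
          have hrP : P.IsRoot r := (mem_roots'.1 hr).2
          exact Complex.one_half_le_re_div_sub hz (hroots r hrP) fun h ↦ hPz (h ▸ hrP)
      _ = (P.roots.map fun r ↦ z / (z - r)).sum.re := by
          simpa [Multiset.map_map] using
            (map_multiset_sum Complex.reAddGroupHom (P.roots.map fun r ↦ z / (z - r))).symm
  have hsum : ‖(P.roots.map fun r ↦ z / (z - r)).sum‖ =
      ‖(P.roots.map fun r ↦ 1 / (z - r)).sum‖ := by
    simp only [div_eq_mul_one_div z, Multiset.sum_map_mul_left, norm_mul, hz, one_mul]
  calc (P.natDegree / 2 : ℝ) * ‖P.eval z‖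
      ≤ ‖(P.roots.map fun r ↦ z / (z - r)).sum‖ * ‖P.eval z‖ :=
        mul_le_mul_of_nonneg_right (hre.trans (Complex.re_le_norm _)) (norm_nonneg _)
    _ = ‖(derivative P).eval z‖ := by
        rw [(IsAlgClosed.splits P).eval_derivative_eq_eval_mul_sum hPz, norm_mul, hsum, mul_comm]

end Polynomial

theorem turan_disk_general (P : Polynomial ℂ) (n : ℕ) (hdeg : P.natDegree = n)
    (hz : ∀ z : ℂ, P.IsRoot z → ‖z‖ ≤ 1) :
    (n / 2 : ℝ) * (⨆ z : Metric.closedBall (0:ℂ) 1, ‖P.eval (z : ℂ)‖) ≤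
      ⨆ z : Metric.closedBall (0:ℂ) 1, ‖(Polynomial.derivative P).eval (z : ℂ)‖ := by
  subst hdeg
  obtain ⟨z₀, hz₀, hmax⟩ :=
    Complex.exists_norm_eq_one_isMaxOn_closedBall (f := P.eval) P.differentiable.diffContOnCl
  have hsup : (⨆ z : Metric.closedBall (0:ℂ) 1, ‖P.eval (z : ℂ)‖) ≤ ‖P.eval z₀‖ :=
    ciSup_le fun z ↦ hmax z.2
  calc (P.natDegree / 2 : ℝ) * (⨆ z : Metric.closedBall (0:ℂ) 1, ‖P.eval (z : ℂ)‖)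
      ≤ (P.natDegree / 2 : ℝ) * ‖P.eval z₀‖ := by gcongr
    _ ≤ ‖(derivative P).eval z₀‖ :=
        natDegree_div_two_mul_norm_eval_le_norm_eval_derivative hz₀ hz
    _ ≤ _ := (isCompact_closedBall 0 1).le_ciSup_of_continuousOn
        (derivative P).continuous.norm.continuousOn (mem_closedBall_zero_iff.2 hz₀.le)

theorem turan_disk (P : Polynomial ℂ) (n : ℕ) (hn : 1 ≤ n) (hdeg : P.natDegree = n)
    (hz : ∀ z : ℂ, P.IsRoot z → ‖z‖ ≤ 1) :
    (n / 2 : ℝ) * (⨆ z : Metric.closedBall (0:ℂ) 1, ‖P.eval (z : ℂ)‖) ≤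
      ⨆ z : Metric.closedBall (0:ℂ) 1, ‖(Polynomial.derivative P).eval (z : ℂ)‖ :=
  turan_disk_general P n hdeg hz
end

section
/- If P is a complex polynomial of degree n ≥ 1 having all its zeros in the closed disk D(0,R) of radius R ≤ 1 centered at 0, then ‖P'‖_D ≥ (n/(1+R)) ‖P‖_D, where D is the closed unit disk. -/
/-!
Pick `z₀` on the unit circle where `‖P‖` attains its maximum over the disk (maximum modulus
principle). Over `ℂ`, `z₀ P'(z₀) / P(z₀) = ∑ z₀ / (z₀ - a)` over the roots `a` of `P`, and for
`‖z₀‖ = 1`, `‖a‖ ≤ R ≤ 1` each term has real part at least `1 / (1 + R)`. Hence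
`‖P'(z₀)‖ ≥ Re (z₀ P'(z₀) / P(z₀)) ‖P(z₀)‖ ≥ n / (1 + R) ‖P(z₀)‖`.
-/

open Polynomial

/- `w ↦ (1 - w)⁻¹` maps the disk `‖w‖ ≤ R < 1` onto the disk with diameter
`[1 / (1 + R), 1 / (1 - R)]`; after clearing denominators the claim reads
`‖1 - w‖² ≤ (1 + R) Re (1 - w)`, whose slack is `(1 - R) (R + Re w) + R² - ‖w‖²`. -/
lemma one_div_one_add_le_re_inv_one_sub {R : ℝ} (hR : R ≤ 1) {w : ℂ} (hw : ‖w‖ ≤ R)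
    (hw1 : w ≠ 1) : 1 / (1 + R) ≤ (1 - w)⁻¹.re := by
  have hR0 : 0 ≤ R := (norm_nonneg w).trans hw
  have hre : -R ≤ w.re := (neg_le_neg hw).trans (neg_le_of_abs_le (Complex.abs_re_le_norm w))
  have hsq : w.re * w.re + w.im * w.im ≤ R ^ 2 := by
    rw [← Complex.normSq_apply, ← Complex.sq_norm]
    gcongr
  have hpos : 0 < Complex.normSq (1 - w) := Complex.normSq_pos.2 (sub_ne_zero.2 hw1.symm)
  rw [Complex.inv_re, div_le_div_iff₀ (by linarith) hpos]
  rw [Complex.normSq_apply] at hpos ⊢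
  simp only [Complex.sub_re, Complex.sub_im, Complex.one_re, Complex.one_im] at hpos ⊢
  nlinarith [mul_nonneg (sub_nonneg.2 hR) (by linarith : 0 ≤ R + w.re)]

lemma one_div_one_add_le_re_div_sub {R : ℝ} (hR : R ≤ 1) {a z : ℂ} (ha : ‖a‖ ≤ R)
    (hz : ‖z‖ = 1) (hza : z ≠ a) : 1 / (1 + R) ≤ (z / (z - a)).re := by
  have hz0 : z ≠ 0 := norm_ne_zero_iff.1 (by simp [hz])
  have hsub : z - a ≠ 0 := sub_ne_zero.2 hza
  have hinv : z / (z - a) = (1 - a / z)⁻¹ := by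
    field_simp
  rw [hinv]
  refine one_div_one_add_le_re_inv_one_sub hR (by rwa [norm_div, hz, div_one]) ?_
  rwa [ne_eq, div_eq_one_iff_eq hz0, eq_comm]

lemma natDegree_div_one_add_le_re_mul_logDeriv {P : ℂ[X]} {R : ℝ} (hR : R ≤ 1)
    (hroots : ∀ a, P.IsRoot a → ‖a‖ ≤ R) {z : ℂ} (hz : ‖z‖ = 1) (hPz : P.eval z ≠ 0) :
    P.natDegree / (1 + R) ≤ (z * (P.derivative.eval z / P.eval z)).re := by
  have hre (s : Multiset ℂ) : s.sum.re = (s.map Complex.re).sum :=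
    map_multiset_sum Complex.reAddGroupHom s
  rw [(IsAlgClosed.splits P).eval_derivative_div_eval_of_ne_zero hPz,
    ← Multiset.sum_map_mul_left, hre, Multiset.map_map, ← IsAlgClosed.card_roots_eq_natDegree,
    div_eq_mul_one_div, ← nsmul_eq_mul]
  refine (Multiset.card_map _ _).symm ▸ Multiset.card_nsmul_le_sum fun x hx => ?_
  obtain ⟨a, ha, rfl⟩ := Multiset.mem_map.1 hx
  have hPa : P.IsRoot a := isRoot_of_mem_roots ha
  simpa only [Function.comp_apply, mul_one_div] using
    one_div_one_add_le_re_div_sub hR (hroots a hPa) hz (fun h => hPz (h ▸ hPa))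

lemma natDegree_div_one_add_mul_norm_eval_le {P : ℂ[X]} {R : ℝ} (hR : R ≤ 1)
    (hroots : ∀ a, P.IsRoot a → ‖a‖ ≤ R) {z : ℂ} (hz : ‖z‖ = 1) :
    P.natDegree / (1 + R) * ‖P.eval z‖ ≤ ‖P.derivative.eval z‖ := by
  rcases eq_or_ne (P.eval z) 0 with hPz | hPz
  · simp [hPz]
  calc P.natDegree / (1 + R) * ‖P.eval z‖
      ≤ (z * (P.derivative.eval z / P.eval z)).re * ‖P.eval z‖ := by
        gcongr
        exact natDegree_div_one_add_le_re_mul_logDeriv hR hroots hz hPz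
    _ ≤ ‖z * (P.derivative.eval z / P.eval z)‖ * ‖P.eval z‖ := by
        gcongr
        exact Complex.re_le_norm _
    _ = ‖P.derivative.eval z‖ := by
        rw [norm_mul, hz, one_mul, norm_div, div_mul_cancel₀ _ (norm_ne_zero_iff.2 hPz)]

lemma norm_le_iSup_closedBall {E : Type*} [NormedAddCommGroup E] {f : ℂ → E}
    (hf : Continuous f) {z : ℂ} (hz : z ∈ Metric.closedBall (0 : ℂ) 1) :
    ‖f z‖ ≤ ⨆ w : Metric.closedBall (0 : ℂ) 1, ‖f w‖ := by
  have : CompactSpace (Metric.closedBall (0 : ℂ) 1) :=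
    isCompact_iff_compactSpace.1 (isCompact_closedBall 0 1)
  exact le_ciSup (isCompact_range (hf.comp continuous_subtype_val).norm).bddAbove
    (⟨z, hz⟩ : Metric.closedBall (0 : ℂ) 1)

lemma exists_norm_eq_one_iSup_closedBall_le {F : Type*} [NormedAddCommGroup F]
    [NormedSpace ℂ F] {f : ℂ → F} (hf : Differentiable ℂ f) :
    ∃ z : ℂ, ‖z‖ = 1 ∧ ⨆ w : Metric.closedBall (0 : ℂ) 1, ‖f w‖ ≤ ‖f z‖ := by
  obtain ⟨z, hz, hmax⟩ := Complex.exists_mem_frontier_isMaxOn_norm Metric.isBounded_ball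
    ⟨0, Metric.mem_ball_self one_pos⟩ hf.diffContOnCl
  rw [frontier_ball 0 one_ne_zero, mem_sphere_zero_iff_norm] at hz
  rw [closure_ball 0 one_ne_zero] at hmax
  exact ⟨z, hz, ciSup_le fun w => hmax w.2⟩

theorem turan_disk_R_general (P : Polynomial ℂ) (n : ℕ) (R : ℝ) (hdeg : P.natDegree = n)
    (hR0 : 0 ≤ R) (hR1 : R ≤ 1) (hz : ∀ z : ℂ, P.IsRoot z → ‖z‖ ≤ R) :
    ((n : ℝ) / (1 + R)) * (⨆ z : Metric.closedBall (0:ℂ) 1, ‖P.eval (z : ℂ)‖) ≤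
      ⨆ z : Metric.closedBall (0:ℂ) 1, ‖(Polynomial.derivative P).eval (z : ℂ)‖ := by
  subst hdeg
  obtain ⟨z₀, hz₀, hmax⟩ := exists_norm_eq_one_iSup_closedBall_le P.differentiable
  calc P.natDegree / (1 + R) * ⨆ w : Metric.closedBall (0 : ℂ) 1, ‖P.eval (w : ℂ)‖
      ≤ P.natDegree / (1 + R) * ‖P.eval z₀‖ := by gcongr
    _ ≤ ‖P.derivative.eval z₀‖ := natDegree_div_one_add_mul_norm_eval_le hR1 hz hz₀
    _ ≤ _ := norm_le_iSup_closedBall (f := fun w => P.derivative.eval w) P.derivative.continuous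
        (mem_closedBall_zero_iff.2 hz₀.le)

theorem turan_disk_R (P : Polynomial ℂ) (n : ℕ) (R : ℝ) (hn : 1 ≤ n) (hdeg : P.natDegree = n)
    (hR0 : 0 ≤ R) (hR1 : R ≤ 1) (hz : ∀ z : ℂ, P.IsRoot z → ‖z‖ ≤ R) :
    ((n : ℝ) / (1 + R)) * (⨆ z : Metric.closedBall (0:ℂ) 1, ‖P.eval (z : ℂ)‖) ≤
      ⨆ z : Metric.closedBall (0:ℂ) 1, ‖(Polynomial.derivative P).eval (z : ℂ)‖ :=
  turan_disk_R_general P n R hdeg hR0 hR1 hz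
end

section
/- For every ε > 0 and every integer n ≥ 1 there exists a polynomial P of degree N := mn (where m is the even integer with 1/ε < m ≤ 1/ε + 2) having all its zeros on the unit circle such that ‖P'‖_{[-1,1]} ≤ (1/ε + 2)^{1-ε} · N^ε · ‖P‖_{[-1,1]}. -/
open Polynomial Set

/-!
For even `m`, `P = (X ^ m - 1) ^ n` vanishes only at `m`-th roots of unity, `|P(0)| = 1`, and on
`[-1, 1]` we have `|P'(x)| = m n |x|^(m-1) (1 - |x|^m)^(n-1)`. Writing `u = |x|^m`, the elementary
bound `n u (1 - u)^(n-1) ≤ 1` gives `(n |x|^(m-1) (1 - |x|^m)^(n-1))^m ≤ n`, hence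
`‖P'‖ ≤ m n^(1/m) ≤ m^(1-ε) (mn)^ε`, and `m ≤ 1/ε + 2` finishes the case `ε ≤ 1`.

For `ε > 1` the factor `(1/ε + 2)^(1-ε)` is below `1` and this `P` fails when `n = 1`; instead take
`P = (X ^ m + 1) ^ n`, whose zeros are `m`-th roots of `-1`. Now `|P(1)| = 2^n` and
`‖P'‖ ≤ N 2^n / 2` with `N = mn`, so it suffices that `N / 2 ≤ (1/ε + 2)^(1-ε) N^ε`, which for
`N ≥ 2` reduces to `(1/ε + 2)^(ε-1) ≤ 2^ε`, a consequence of `1 + t ≤ exp t` and `exp (1/2) ≤ 2`.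
-/

lemma one_sub_pow_mul_one_add_mul_le_one {u : ℝ} (hu : |u| ≤ 1) (k : ℕ) :
    (1 - u) ^ k * (1 + k * u) ≤ 1 := by
  obtain ⟨hu₀, hu₁⟩ := abs_le.1 hu
  calc (1 - u) ^ k * (1 + k * u) ≤ (1 - u) ^ k * (1 + u) ^ k := by
        gcongr
        exact one_add_mul_le_pow (by linarith) k
    _ = (1 - u ^ 2) ^ k := by rw [← mul_pow]; ring
    _ ≤ 1 := pow_le_one₀ (by nlinarith) (by nlinarith)

lemma natCast_mul_mul_one_sub_pow_le_one {u : ℝ} (hu₀ : 0 ≤ u) (hu₁ : u ≤ 1) (n : ℕ) :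
    n * u * (1 - u) ^ (n - 1) ≤ 1 := by
  cases n with
  | zero => simp
  | succ k =>
    have hpow : 0 ≤ (1 - u) ^ k := pow_nonneg (by linarith) k
    calc ((k + 1 : ℕ) : ℝ) * u * (1 - u) ^ (k + 1 - 1) ≤ (1 - u) ^ k * (1 + k * u) := by
          push_cast; nlinarith
      _ ≤ 1 := one_sub_pow_mul_one_add_mul_le_one (abs_le.2 ⟨by linarith, hu₁⟩) k

lemma natCast_mul_pow_mul_one_sub_pow_pow_le {m : ℕ} (hm : m ≠ 0) (n : ℕ) {s : ℝ}
    (hs₀ : 0 ≤ s) (hs₁ : s ≤ 1) : (n * s ^ (m - 1) * (1 - s ^ m) ^ (n - 1)) ^ m ≤ n := by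
  obtain ⟨k, rfl⟩ := Nat.exists_eq_add_one_of_ne_zero hm
  have hu₁ : s ^ (k + 1) ≤ 1 := pow_le_one₀ hs₀ hs₁
  have hkey := natCast_mul_mul_one_sub_pow_le_one (by positivity) hu₁ n
  have ht₀ : 0 ≤ (1 - s ^ (k + 1)) ^ (n - 1) := pow_nonneg (by linarith) _
  have ht₁ : (1 - s ^ (k + 1)) ^ (n - 1) ≤ 1 :=
    pow_le_one₀ (by linarith) (by linarith [pow_nonneg hs₀ (k + 1)])
  calc (n * s ^ (k + 1 - 1) * (1 - s ^ (k + 1)) ^ (n - 1)) ^ (k + 1)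
      = n * (n * s ^ (k + 1) * (1 - s ^ (k + 1)) ^ (n - 1)) ^ k * (1 - s ^ (k + 1)) ^ (n - 1) := by
        rw [Nat.add_sub_cancel]; ring
    _ ≤ n * 1 ^ k * 1 := by gcongr
    _ = n := by ring

lemma natCast_mul_pow_mul_one_sub_pow_le_rpow {m : ℕ} (hm : m ≠ 0) (n : ℕ) {s : ℝ}
    (hs₀ : 0 ≤ s) (hs₁ : s ≤ 1) :
    n * s ^ (m - 1) * (1 - s ^ m) ^ (n - 1) ≤ (n : ℝ) ^ (m⁻¹ : ℝ) := by
  have : 0 ≤ 1 - s ^ m := by linarith [pow_le_one₀ (n := m) hs₀ hs₁]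
  calc _ = ((n * s ^ (m - 1) * (1 - s ^ m) ^ (n - 1)) ^ m) ^ (m⁻¹ : ℝ) :=
        (Real.pow_rpow_inv_natCast (by positivity) hm).symm
    _ ≤ _ := by gcongr; exact natCast_mul_pow_mul_one_sub_pow_pow_le hm n hs₀ hs₁

section XPowSubCPow

variable (c : ℂ) (m n : ℕ)

lemma natDegree_X_pow_sub_C_pow : ((X ^ m - C c) ^ n).natDegree = m * n := by
  rw [natDegree_pow, natDegree_X_pow_sub_C, mul_comm]

variable {c m n} in
lemma norm_eq_one_of_isRoot_X_pow_sub_C_pow (hc : ‖c‖ = 1) (hm : m ≠ 0) {z : ℂ}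
    (hz : ((X ^ m - C c) ^ n).IsRoot z) : ‖z‖ = 1 := by
  obtain ⟨hzm, -⟩ : z ^ m = c ∧ n ≠ 0 := by simpa [sub_eq_zero] using hz
  rw [← pow_left_inj₀ (norm_nonneg z) zero_le_one hm, ← norm_pow, hzm, hc, one_pow]

lemma norm_eval_derivative_X_pow_sub_C_pow (z : ℂ) :
    ‖(derivative ((X ^ m - C c) ^ n)).eval z‖ =
      m * (n * ‖z‖ ^ (m - 1) * ‖z ^ m - c‖ ^ (n - 1)) := by
  rw [derivative_pow, derivative_sub, derivative_X_pow, derivative_C, sub_zero]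
  simp only [eval_mul, eval_pow, eval_sub, eval_X, eval_C, norm_mul, norm_pow, Complex.norm_natCast]
  ring

end XPowSubCPow

lemma norm_eval_le_iSup_Icc (P : ℂ[X]) {a b x : ℝ} (hx : x ∈ Icc a b) :
    ‖P.eval (x : ℂ)‖ ≤ ⨆ y : Icc a b, ‖P.eval ((y : ℝ) : ℂ)‖ :=
  le_ciSup (f := fun y : Icc a b => ‖P.eval ((y : ℝ) : ℂ)‖)
    (isCompact_range (by fun_prop)).bddAbove ⟨x, hx⟩

lemma iSup_norm_eval_derivative_X_pow_sub_one_pow_le {m : ℕ} (hm : Even m) (hm₀ : m ≠ 0)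
    (n : ℕ) : (⨆ x : Icc (-1 : ℝ) 1, ‖(derivative ((X ^ m - C 1) ^ n)).eval ((x : ℝ) : ℂ)‖) ≤
      m * (n : ℝ) ^ (m⁻¹ : ℝ) := by
  refine Real.iSup_le (fun x => ?_) (by positivity)
  have hx : |(x : ℝ)| ≤ 1 := abs_le.2 x.2
  have hxm : ‖((x : ℝ) : ℂ) ^ m - 1‖ = 1 - |(x : ℝ)| ^ m := by
    rw [← Complex.ofReal_pow, ← Complex.ofReal_one, ← Complex.ofReal_sub, Complex.norm_real,
      Real.norm_eq_abs, ← hm.pow_abs, abs_sub_comm,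
      abs_of_nonneg (by linarith [pow_le_one₀ (n := m) (abs_nonneg _) hx])]
  rw [norm_eval_derivative_X_pow_sub_C_pow, hxm, Complex.norm_real, Real.norm_eq_abs]
  exact mul_le_mul_of_nonneg_left
    (natCast_mul_pow_mul_one_sub_pow_le_rpow hm₀ n (abs_nonneg _) hx) (Nat.cast_nonneg m)

lemma one_le_iSup_norm_eval_X_pow_sub_one_pow {m : ℕ} (hm : m ≠ 0) (n : ℕ) :
    1 ≤ ⨆ x : Icc (-1 : ℝ) 1, ‖((X ^ m - C 1) ^ n : ℂ[X]).eval ((x : ℝ) : ℂ)‖ :=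
  calc 1 = ‖((X ^ m - C 1) ^ n : ℂ[X]).eval ((0 : ℝ) : ℂ)‖ := by simp [hm]
    _ ≤ _ := norm_eval_le_iSup_Icc _ (by norm_num)

lemma iSup_norm_eval_derivative_X_pow_add_one_pow_le (m n : ℕ) :
    (⨆ x : Icc (-1 : ℝ) 1, ‖(derivative ((X ^ m - C (-1)) ^ n)).eval ((x : ℝ) : ℂ)‖) ≤
      m * n * 2 ^ n / 2 := by
  refine Real.iSup_le (fun x => ?_) (by positivity)
  have hx : ‖((x : ℝ) : ℂ)‖ ≤ 1 := by
    rw [Complex.norm_real, Real.norm_eq_abs]; exact abs_le.2 x.2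
  have hxm : ‖((x : ℝ) : ℂ) ^ m - -1‖ ≤ 2 :=
    calc _ ≤ ‖((x : ℝ) : ℂ) ^ m‖ + ‖(-1 : ℂ)‖ := norm_sub_le _ _
      _ ≤ 1 + 1 := by
        gcongr
        · rw [norm_pow]; exact pow_le_one₀ (norm_nonneg _) hx
        · simp
      _ = 2 := by norm_num
  rw [norm_eval_derivative_X_pow_sub_C_pow]
  calc (m : ℝ) * (n * ‖((x : ℝ) : ℂ)‖ ^ (m - 1) * ‖((x : ℝ) : ℂ) ^ m - -1‖ ^ (n - 1))
      ≤ m * (n * 1 * 2 ^ (n - 1)) := by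
        gcongr
        exact pow_le_one₀ (norm_nonneg _) hx
    _ = m * n * 2 ^ n / 2 := by
        cases n with
        | zero => simp
        | succ k => rw [Nat.add_sub_cancel, pow_succ]; ring

lemma two_pow_le_iSup_norm_eval_X_pow_add_one_pow (m n : ℕ) :
    2 ^ n ≤ ⨆ x : Icc (-1 : ℝ) 1, ‖((X ^ m - C (-1)) ^ n : ℂ[X]).eval ((x : ℝ) : ℂ)‖ :=
  calc (2 : ℝ) ^ n = ‖((X ^ m - C (-1)) ^ n : ℂ[X]).eval ((1 : ℝ) : ℂ)‖ := by norm_num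
    _ ≤ _ := norm_eval_le_iSup_Icc _ (by norm_num)

lemma mul_rpow_inv_le_rpow_one_sub_mul_rpow {a b c ε : ℝ} (ha : 0 < a) (hac : a ≤ c)
    (hb : 1 ≤ b) (haε : a⁻¹ ≤ ε) (hε : ε ≤ 1) : a * b ^ a⁻¹ ≤ c ^ (1 - ε) * (a * b) ^ ε :=
  calc a * b ^ a⁻¹ ≤ a * b ^ ε := by gcongr
    _ = a ^ (1 - ε) * (a * b) ^ ε := by
        rw [Real.mul_rpow ha.le (by linarith), ← mul_assoc, ← Real.rpow_add ha, sub_add_cancel,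
          Real.rpow_one]
    _ ≤ c ^ (1 - ε) * (a * b) ^ ε := by gcongr

lemma one_div_add_two_rpow_sub_one_le {ε : ℝ} (hε : 1 ≤ ε) : (1 / ε + 2) ^ (ε - 1) ≤ 2 ^ ε := by
  have hε₀ : 0 < ε := by linarith
  have hexp : Real.exp (1 / 2) ≤ 2 := by
    have h := Real.add_one_le_exp (-(1 / 2))
    rw [Real.exp_neg, le_inv_comm₀ (by norm_num) (Real.exp_pos _)] at h
    norm_num at h
    exact h
  calc (1 / ε + 2) ^ (ε - 1) = 2 ^ (ε - 1) * (1 + 1 / (2 * ε)) ^ (ε - 1) := by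
        rw [← Real.mul_rpow (by norm_num) (by positivity)]
        congr 1
        field_simp
        ring
    _ ≤ 2 ^ (ε - 1) * Real.exp (1 / (2 * ε)) ^ (ε - 1) := by
        gcongr
        linarith [Real.add_one_le_exp (1 / (2 * ε))]
    _ = 2 ^ (ε - 1) * Real.exp ((ε - 1) / (2 * ε)) := by
        rw [← Real.exp_mul]; ring_nf
    _ ≤ 2 ^ (ε - 1) * 2 := by
        gcongr
        refine le_trans (Real.exp_le_exp.2 ?_) hexp
        rw [div_le_iff₀ (by positivity)]
        linarith
    _ = 2 ^ ε := by rw [Real.rpow_sub_one two_ne_zero]; field_simp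

lemma le_two_mul_rpow_one_sub_mul_rpow {N ε : ℝ} (hN : 2 ≤ N) (hε : 1 ≤ ε) :
    N ≤ 2 * ((1 / ε + 2) ^ (1 - ε) * N ^ ε) := by
  have hc : 0 < 1 / ε + 2 := by positivity
  have hinv : (1 / ε + 2) ^ (1 - ε) * (1 / ε + 2) ^ (ε - 1) = 1 := by
    rw [← Real.rpow_add hc]; simp
  have hB : (1 / ε + 2) ^ (ε - 1) ≤ 2 * N ^ (ε - 1) :=
    calc _ ≤ (2 : ℝ) ^ ε := one_div_add_two_rpow_sub_one_le hε
      _ = 2 * 2 ^ (ε - 1) := by rw [Real.rpow_sub_one two_ne_zero]; field_simp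
      _ ≤ 2 * N ^ (ε - 1) := by gcongr
  calc N = (1 / ε + 2) ^ (1 - ε) * (1 / ε + 2) ^ (ε - 1) * N := by rw [hinv, one_mul]
    _ ≤ (1 / ε + 2) ^ (1 - ε) * (2 * N ^ (ε - 1)) * N := by gcongr
    _ = 2 * ((1 / ε + 2) ^ (1 - ε) * N ^ ε) := by
        rw [Real.rpow_sub_one (by positivity)]; field_simp

theorem counterexample_disk (ε : ℝ) (hε : 0 < ε) (n : ℕ) (hn : 1 ≤ n)
    (m : ℕ) (hme : Even m) (hm1 : 1/ε < (m:ℝ)) (hm2 : (m:ℝ) ≤ 1/ε + 2) :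
    ∃ P : Polynomial ℂ, P.natDegree = m * n ∧ (∀ z : ℂ, P.IsRoot z → ‖z‖ = 1) ∧
      (⨆ x : Icc (-1:ℝ) 1, ‖(Polynomial.derivative P).eval ((x : ℝ) : ℂ)‖) ≤
        (1/ε + 2) ^ (1 - ε) * ((m * n : ℕ) : ℝ) ^ ε *
          ⨆ x : Icc (-1:ℝ) 1, ‖P.eval ((x : ℝ) : ℂ)‖ := by
  have hm : (0 : ℝ) < m := lt_trans (by positivity) hm1
  have hm₀ : m ≠ 0 := by exact_mod_cast hm.ne'
  rcases le_or_gt ε 1 with hε₁ | hε₁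
  · refine ⟨(X ^ m - C 1) ^ n, natDegree_X_pow_sub_C_pow 1 m n,
      fun z hz => norm_eq_one_of_isRoot_X_pow_sub_C_pow norm_one hm₀ hz, ?_⟩
    calc _ ≤ m * (n : ℝ) ^ (m⁻¹ : ℝ) := iSup_norm_eval_derivative_X_pow_sub_one_pow_le hme hm₀ n
      _ ≤ (1 / ε + 2) ^ (1 - ε) * ((m * n : ℕ) : ℝ) ^ ε * 1 := by
          rw [mul_one, Nat.cast_mul]
          refine mul_rpow_inv_le_rpow_one_sub_mul_rpow hm hm2 (by exact_mod_cast hn) ?_ hε₁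
          exact inv_le_of_inv_le₀ hε (by simpa using hm1.le)
      _ ≤ _ := by gcongr; exact one_le_iSup_norm_eval_X_pow_sub_one_pow hm₀ n
  · have hmn : (2 : ℝ) ≤ ((m * n : ℕ) : ℝ) := by
      obtain ⟨k, rfl⟩ := hme
      exact_mod_cast Nat.mul_le_mul (by omega : 2 ≤ k + k) hn
    refine ⟨(X ^ m - C (-1)) ^ n, natDegree_X_pow_sub_C_pow (-1) m n,
      fun z hz => norm_eq_one_of_isRoot_X_pow_sub_C_pow (by simp) hm₀ hz, ?_⟩
    calc _ ≤ ((m * n : ℕ) : ℝ) * 2 ^ n / 2 := by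
          push_cast; exact iSup_norm_eval_derivative_X_pow_add_one_pow_le m n
      _ ≤ (1 / ε + 2) ^ (1 - ε) * ((m * n : ℕ) : ℝ) ^ ε * 2 ^ n := by
          have := le_two_mul_rpow_one_sub_mul_rpow hmn hε₁.le
          calc _ ≤ 2 * ((1 / ε + 2) ^ (1 - ε) * ((m * n : ℕ) : ℝ) ^ ε) * 2 ^ n / 2 := by gcongr
            _ = _ := by ring
      _ ≤ _ := by gcongr; exact two_pow_le_iSup_norm_eval_X_pow_add_one_pow m n
end

section
/- Let 1 ≤ k ≤ n-1 and S(x) := x^{n-k} R(x) with R a real polynomial of degree at most k. Then |S(x)| ≤ x^{(n-k)/2} · ‖S‖_{[0,1]} for all x ∈ [0, 1 - 10k/(n-k)]. -/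
/-!
Write `m = n - k`, `S = X ^ m * R` and `M = ‖S‖_{[0,1]}`. At the equispaced nodes
`v i = 1 - i / m`, `0 ≤ i ≤ k`, we have `v i ^ m ≥ e^{-10 i / 9} ≥ (5/16) ^ i` because
`10 k ≤ m`, so `|R (v i)| ≤ (16/5) ^ i M`. All nodes lie to the right of `x`, so the Lagrange
basis polynomials satisfy `|ℓ i x| ≤ ((1 - x) m) ^ k / (i! (k - i)!)`, and summing gives
`|R x| ≤ M (21/5 · (1 - x) m) ^ k / k!`. Finally `x ^ (m/2) ≤ e^{-t/2}` with
`t = (1 - x) m ≥ 10 k`, and `(t/10) ^ k / k! ≤ e^{t/10}` gives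
`e^{-t/2} (21 t / 5) ^ k / k! ≤ 42 ^ k e^{-2t/5} ≤ (42 / e ^ 4) ^ k ≤ 1`;
hence `|S x| = x ^ m |R x| ≤ x ^ (m/2) M`.
-/

open Polynomial Set Real Nat

lemma exp_ten_ninths_le : exp (10 / 9) ≤ 16 / 5 := by
  have hpow : exp (10 / 9) ^ 9 = exp 1 ^ 10 := by
    rw [← exp_nat_mul, ← exp_nat_mul]; norm_num
  refine le_of_pow_le_pow_left₀ (n := 9) (by norm_num) (by norm_num) ?_
  rw [hpow]
  calc exp 1 ^ 10 ≤ 2.7182818286 ^ 10 := by gcongr; exact exp_one_lt_d9.le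
    _ ≤ (16 / 5) ^ 9 := by norm_num

lemma forty_two_le_exp_four : 42 ≤ exp 4 := by
  calc (42 : ℝ) ≤ 2.7182818283 ^ 4 := by norm_num
    _ ≤ exp 1 ^ 4 := by gcongr; exact exp_one_gt_d9.le
    _ = exp 4 := by rw [← exp_nat_mul]; norm_num

lemma exp_neg_mul_le_one_sub {t : ℝ} (ht0 : 0 ≤ t) (ht : t ≤ 1 / 10) :
    exp (-(10 / 9 * t)) ≤ 1 - t := by
  have h1t : 0 < 1 - t := by linarith
  have hinv : (1 - t)⁻¹ ≤ 1 + 10 / 9 * t := by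
    rw [inv_le_iff_one_le_mul₀' h1t]; nlinarith
  calc exp (-(10 / 9 * t)) ≤ exp (log (1 - t)) := by
        gcongr; linarith [one_sub_inv_le_log_of_pos h1t]
    _ = 1 - t := exp_log h1t

lemma five_sixteenths_pow_le_one_sub_div_pow {i m : ℕ} (him : 10 * i ≤ m) :
    (5 / 16 : ℝ) ^ i ≤ (1 - i / m) ^ m := by
  rcases Nat.eq_zero_or_pos m with rfl | hm
  · obtain rfl : i = 0 := by omega
    simp
  have hm' : (0 : ℝ) < m := by exact_mod_cast hm
  have him' : (10 : ℝ) * i ≤ m := by exact_mod_cast him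
  have ht : (i : ℝ) / m ≤ 1 / 10 := by rw [div_le_iff₀ hm']; linarith
  calc (5 / 16 : ℝ) ^ i ≤ (exp (10 / 9))⁻¹ ^ i := by
        gcongr
        rw [le_inv_comm₀ (by norm_num) (exp_pos _)]
        linarith [exp_ten_ninths_le]
    _ = exp (-(10 / 9 * (i / m))) ^ m := by
        rw [← exp_neg, ← exp_nat_mul, ← exp_nat_mul]; congr 1; field_simp
    _ ≤ (1 - i / m) ^ m := by
        gcongr; exact exp_neg_mul_le_one_sub (by positivity) ht

lemma prod_erase_range_abs_sub {i k : ℕ} (hik : i ≤ k) :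
    ∏ j ∈ (Finset.range (k + 1)).erase i, |(i : ℝ) - j| = i ! * (k - i)! := by
  have hsplit : (Finset.range (k + 1)).erase i = Finset.range i ∪ Finset.Ico (i + 1) (k + 1) := by
    ext j; simp only [Finset.mem_erase, Finset.mem_range, Finset.mem_union, Finset.mem_Ico]; omega
  have hdisj : Disjoint (Finset.range i) (Finset.Ico (i + 1) (k + 1)) := by
    rw [Finset.disjoint_left]
    intro j hj hj'
    simp only [Finset.mem_range, Finset.mem_Ico] at hj hj'
    omega
  have hlow : ∏ j ∈ Finset.range i, |(i : ℝ) - j| = i ! := by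
    rw [← descFactorial_self, descFactorial_eq_prod_range, Nat.cast_prod]
    refine Finset.prod_congr rfl fun j hj => ?_
    rw [Finset.mem_range] at hj
    rw [Nat.cast_sub hj.le, abs_of_nonneg (by simpa using hj.le)]
  have hhigh : ∏ j ∈ Finset.Ico (i + 1) (k + 1), |(i : ℝ) - j| = (k - i)! := by
    rw [Finset.prod_Ico_eq_prod_range, show k + 1 - (i + 1) = k - i by omega,
      ← Finset.prod_range_add_one_eq_factorial, Nat.cast_prod]
    refine Finset.prod_congr rfl fun j _ => ?_
    rw [abs_sub_comm, abs_of_nonneg (by push_cast; linarith)]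
    push_cast; ring
  rw [hsplit, Finset.prod_union hdisj, hlow, hhigh]

lemma sum_pow_div_factorial_mul_factorial (A : ℝ) (k : ℕ) :
    ∑ i ∈ Finset.range (k + 1), A ^ i / (i ! * (k - i)!) = (A + 1) ^ k / k ! := by
  rw [add_pow, Finset.sum_div]
  refine Finset.sum_congr rfl fun i hi => ?_
  rw [cast_choose ℝ (Nat.lt_succ_iff.mp (Finset.mem_range.mp hi))]
  field_simp
  ring

lemma abs_eval_lagrange_basis_le {c m x : ℝ} (hm : 0 < m) {i k : ℕ} (hik : i ≤ k)
    (hx : x ≤ c - k / m) :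
    |(Lagrange.basis (Finset.range (k + 1)) (fun j : ℕ => c - j / m) i).eval x| ≤
      ((c - x) * m) ^ k / (i ! * (k - i)!) := by
  set s := (Finset.range (k + 1)).erase i
  have hcard : s.card = k := by
    rw [Finset.card_erase_of_mem (by simpa using hik), Finset.card_range]; rfl
  have hdist : ∀ j ∈ s, |x - (c - j / m)| ≤ c - x := by
    intro j hj
    have hjk : (j : ℝ) ≤ k := by
      exact_mod_cast Nat.lt_succ_iff.mp (Finset.mem_range.mp (Finset.mem_of_mem_erase hj))
    have : (j : ℝ) / m ≤ k / m := by gcongr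
    rw [abs_sub_comm, abs_of_nonneg (by linarith)]
    linarith [div_nonneg (Nat.cast_nonneg j) hm.le]
  have hgap : ∏ j ∈ s, |(c - i / m) - (c - j / m)| = i ! * (k - i)! / m ^ k := by
    simp_rw [show ∀ j : ℕ, (c - i / m) - (c - j / m) = -(((i : ℝ) - j) / m) by intro j; ring,
      abs_neg, abs_div, abs_of_pos hm]
    rw [Finset.prod_div_distrib, prod_erase_range_abs_sub hik, Finset.prod_const, hcard]
  rw [Lagrange.basis, eval_prod, Finset.abs_prod]
  simp only [Lagrange.basisDivisor, eval_mul, eval_C, eval_sub, eval_X, abs_mul, abs_inv]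
  rw [Finset.prod_mul_distrib, Finset.prod_inv_distrib, hgap, inv_div, mul_pow,
    div_mul_eq_mul_div, mul_comm _ (m ^ k)]
  gcongr
  calc ∏ j ∈ s, |x - (c - j / m)| ≤ ∏ _j ∈ s, (c - x) :=
        Finset.prod_le_prod (fun _ _ => abs_nonneg _) hdist
    _ = (c - x) ^ k := by rw [Finset.prod_const, hcard]

lemma abs_eval_le_of_abs_eval_nodes_le {R : ℝ[X]} {k : ℕ} (hR : R.natDegree ≤ k)
    {c m x A B : ℝ} (hm : 0 < m) (hnode : ∀ i ≤ k, |R.eval (c - i / m)| ≤ A ^ i * B)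
    (hx : x ≤ c - k / m) :
    |R.eval x| ≤ B * ((A + 1) * ((c - x) * m)) ^ k / k ! := by
  have hinj : Set.InjOn (fun j : ℕ => c - j / m) (Finset.range (k + 1)) := by
    intro a _ b _ hab
    simpa [hm.ne'] using hab
  have hdeg : R.degree < (Finset.range (k + 1)).card := by
    rw [Finset.card_range]
    exact (degree_le_of_natDegree_le hR).trans_lt (by exact_mod_cast Nat.lt_succ_self k)
  rw [Lagrange.eq_interpolate hinj hdeg, Lagrange.interpolate_apply, eval_finsetSum]
  calc |∑ i ∈ Finset.range (k + 1), (C (R.eval (c - i / m)) *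
          Lagrange.basis (Finset.range (k + 1)) (fun j : ℕ => c - j / m) i).eval x|
      ≤ ∑ i ∈ Finset.range (k + 1), A ^ i * B * (((c - x) * m) ^ k / (i ! * (k - i)!)) := by
        refine (Finset.abs_sum_le_sum_abs _ _).trans (Finset.sum_le_sum fun i hi => ?_)
        have hik := Nat.lt_succ_iff.mp (Finset.mem_range.mp hi)
        rw [eval_mul, eval_C, abs_mul]
        exact mul_le_mul (hnode i hik) (abs_eval_lagrange_basis_le hm hik hx) (abs_nonneg _)
          ((abs_nonneg _).trans (hnode i hik))
    _ = B * ((c - x) * m) ^ k * ∑ i ∈ Finset.range (k + 1), A ^ i / (i ! * (k - i)!) := by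
        rw [Finset.mul_sum]; refine Finset.sum_congr rfl fun i _ => ?_; ring
    _ = B * ((A + 1) * ((c - x) * m)) ^ k / k ! := by
        rw [sum_pow_div_factorial_mul_factorial, mul_pow (A + 1)]; ring

lemma exp_neg_half_mul_pow_div_factorial_le_one {k : ℕ} {t : ℝ} (ht : 10 * k ≤ t) :
    exp (-(t / 2)) * (21 / 5 * t) ^ k / k ! ≤ 1 := by
  have ht0 : 0 ≤ t := le_trans (by positivity) ht
  have hpow : (21 / 5 * t) ^ k / k ! ≤ 42 ^ k * exp (t / 10) := by
    rw [show 21 / 5 * t = 42 * (t / 10) by ring, mul_pow, mul_div_assoc]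
    gcongr
    exact pow_div_factorial_le_exp _ (by positivity) k
  calc exp (-(t / 2)) * (21 / 5 * t) ^ k / k !
      ≤ exp (-(t / 2)) * (42 ^ k * exp (t / 10)) := by
        rw [mul_div_assoc]; gcongr
    _ = 42 ^ k * exp (-(2 / 5 * t)) := by
        rw [mul_left_comm, ← exp_add]; ring_nf
    _ ≤ exp 4 ^ k * exp (-(4 * k)) := by
        gcongr ?_ * ?_
        · exact pow_le_pow_left₀ (by norm_num) forty_two_le_exp_four k
        · exact exp_le_exp.mpr (by linarith)
    _ = 1 := by rw [← exp_nat_mul, ← exp_add]; ring_nf; exact exp_zero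

lemma rpow_half_le_exp {x : ℝ} (hx : 0 ≤ x) {m : ℝ} (hm : 0 ≤ m) :
    x ^ (m / 2) ≤ exp (-((1 - x) * m / 2)) := by
  calc x ^ (m / 2) ≤ exp (x - 1) ^ (m / 2) := by
        gcongr; linarith [add_one_le_exp (x - 1)]
    _ = exp (-((1 - x) * m / 2)) := by rw [← exp_mul]; ring_nf

lemma rpow_half_mul_pow_div_factorial_le_one {x m : ℝ} (hx : 0 ≤ x) (hm : 0 ≤ m) {k : ℕ}
    (hk : 10 * k ≤ (1 - x) * m) :
    x ^ (m / 2) * (21 / 5 * ((1 - x) * m)) ^ k / k ! ≤ 1 := by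
  calc x ^ (m / 2) * (21 / 5 * ((1 - x) * m)) ^ k / k !
      ≤ exp (-((1 - x) * m / 2)) * (21 / 5 * ((1 - x) * m)) ^ k / k ! := by
        have ht : 0 ≤ (1 - x) * m := le_trans (by positivity) hk
        gcongr
        exact rpow_half_le_exp hx hm
    _ ≤ 1 := exp_neg_half_mul_pow_div_factorial_le_one hk

lemma abs_eval_X_pow_mul {R : ℝ[X]} (m : ℕ) {t : ℝ} (ht : 0 ≤ t) :
    |(X ^ m * R).eval t| = t ^ m * |R.eval t| := by
  rw [eval_mul, eval_pow, eval_X, abs_mul, abs_pow, abs_of_nonneg ht]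

lemma abs_eval_one_sub_div_le {m i : ℕ} (him : 10 * i ≤ m) {R : ℝ[X]} {M : ℝ}
    (hM : ∀ t ∈ Icc (0 : ℝ) 1, |(X ^ m * R).eval t| ≤ M) :
    |R.eval (1 - (i : ℝ) / m)| ≤ (16 / 5) ^ i * M := by
  have hmem : 1 - (i : ℝ) / m ∈ Icc (0 : ℝ) 1 :=
    ⟨sub_nonneg.mpr (div_le_one_of_le₀ (by exact_mod_cast (by omega : i ≤ m)) m.cast_nonneg),
      sub_le_self _ (by positivity)⟩
  have hvalue := abs_eval_X_pow_mul m hmem.1 ▸ hM _ hmem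
  have hcancel : (16 / 5 : ℝ) ^ i * (5 / 16) ^ i = 1 := by rw [← mul_pow]; norm_num
  calc |R.eval (1 - (i : ℝ) / m)|
      = (16 / 5) ^ i * ((5 / 16) ^ i * |R.eval (1 - (i : ℝ) / m)|) := by
        rw [← mul_assoc, hcancel, one_mul]
    _ ≤ (16 / 5) ^ i * M := by
        gcongr
        exact (mul_le_mul_of_nonneg_right (five_sixteenths_pow_le_one_sub_div_pow him)
          (abs_nonneg _)).trans hvalue

lemma abs_eval_X_pow_mul_le {m k : ℕ} (hm : 0 < m) {R : ℝ[X]} (hR : R.natDegree ≤ k) {M : ℝ}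
    (hM : ∀ t ∈ Icc (0 : ℝ) 1, |(X ^ m * R).eval t| ≤ M) {x : ℝ} (hx0 : 0 ≤ x)
    (hx : 10 * k ≤ (1 - x) * m) :
    |(X ^ m * R).eval x| ≤ x ^ ((m : ℝ) / 2) * M := by
  have hm' : (0 : ℝ) < m := by exact_mod_cast hm
  have hkm : 10 * k ≤ m := by
    have : (10 * k : ℝ) ≤ m := by nlinarith
    exact_mod_cast this
  have hM0 : 0 ≤ M := (abs_nonneg _).trans (hM 0 ⟨le_rfl, zero_le_one⟩)
  have hnode : ∀ i ≤ k, |R.eval (1 - (i : ℝ) / m)| ≤ (16 / 5) ^ i * M :=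
    fun i hi => abs_eval_one_sub_div_le (by omega) hM
  have hxk : x ≤ 1 - k / m := by
    rw [le_sub_comm, div_le_iff₀ hm']; nlinarith
  have hRx : |R.eval x| ≤ M * (21 / 5 * ((1 - x) * m)) ^ k / k ! := by
    convert abs_eval_le_of_abs_eval_nodes_le hR hm' hnode hxk using 4; norm_num
  have hxm : x ^ m = x ^ ((m : ℝ) / 2) * x ^ ((m : ℝ) / 2) := by
    rw [← rpow_add' hx0 (by positivity), add_halves, rpow_natCast]
  calc |(X ^ m * R).eval x| = x ^ m * |R.eval x| := abs_eval_X_pow_mul m hx0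
    _ ≤ x ^ m * (M * (21 / 5 * ((1 - x) * m)) ^ k / k !) := by gcongr
    _ = x ^ ((m : ℝ) / 2) * M * (x ^ ((m : ℝ) / 2) * (21 / 5 * ((1 - x) * m)) ^ k / k !) := by
        rw [hxm]; ring
    _ ≤ x ^ ((m : ℝ) / 2) * M * 1 := by
        gcongr
        exact rpow_half_mul_pow_div_factorial_le_one hx0 hm'.le hx
    _ = x ^ ((m : ℝ) / 2) * M := mul_one _

theorem incomplete_decay_general (n k : ℕ) (hkn : k ≤ n - 1) (hn : 1 ≤ n)
    (R : Polynomial ℝ) (hR : R.natDegree ≤ k) :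
    ∀ x ∈ Icc (0:ℝ) (1 - 10 * (k:ℝ) / ((n:ℝ) - (k:ℝ))),
      |((X ^ (n - k) * R : Polynomial ℝ)).eval x| ≤
        x ^ (((n:ℝ) - (k:ℝ)) / 2) *
          ⨆ u : Icc (0:ℝ) 1, |((X ^ (n - k) * R : Polynomial ℝ)).eval (u : ℝ)| := by
  rintro x ⟨hx0, hx1⟩
  have hm : 0 < n - k := by omega
  have hm' : (0 : ℝ) < (n - k : ℕ) := by exact_mod_cast hm
  rw [← Nat.cast_sub (by omega)] at hx1 ⊢
  have hbdd :
      BddAbove (Set.range fun u : Icc (0 : ℝ) 1 => |(X ^ (n - k) * R).eval (u : ℝ)|) := by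
    simpa only [Set.image_eq_range] using
      isCompact_Icc.bddAbove_image (X ^ (n - k) * R).continuous.abs.continuousOn
  refine abs_eval_X_pow_mul_le hm hR (fun t ht => le_ciSup hbdd ⟨t, ht⟩) hx0 ?_
  rwa [le_sub_comm, div_le_iff₀ hm'] at hx1

theorem incomplete_decay (n k : ℕ) (hk : 1 ≤ k) (hkn : k ≤ n - 1) (hn : 1 ≤ n)
    (R : Polynomial ℝ) (hR : R.natDegree ≤ k) :
    ∀ x ∈ Icc (0:ℝ) (1 - 10 * (k:ℝ) / ((n:ℝ) - (k:ℝ))),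
      |((X ^ (n - k) * R : Polynomial ℝ)).eval x| ≤
        x ^ (((n:ℝ) - (k:ℝ)) / 2) *
          ⨆ u : Icc (0:ℝ) 1, |((X ^ (n - k) * R : Polynomial ℝ)).eval (u : ℝ)| :=
  incomplete_decay_general n k hkn hn R hR
end

section
/- Let 1 ≤ k ≤ n/2 and W(x) := (1-x)^{n-k} V(x) with V a real polynomial of degree at most k, W not identically zero. Then |y^{1/2} W(y)| < ‖u^{1/2} W(u)‖_{[0,1]} for every y ∈ [10(2k+1)/n, 1]. -/
/-!
Put `t = 1 - y` and `N = 2(n - k)`. The substitution `s = 1 - u` turns `u W(u)²` into `s^N Q(s)`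
with `Q(s) = (1 - s) V(1 - s)²` of degree at most `m = 2k + 1`. If `√y |W(y)|` were maximal,
then at `m + 1` equally spaced nodes in `[t + y/2, 1]` we would have
`|Q| ≤ (t / (t + y/2))^N |Q(t)|`. Lagrange interpolation extrapolates from these nodes back to `t`
losing at most a factor `(4e)^m`, whereas `((t + y/2) / t)^N ≥ (1 + y/2)^N > (4e)^m` because
`N y ≥ 10 m`. Hence `W(y) = 0`, so the maximum is `0` and `W` vanishes on `[0, 1]`.
-/

open Polynomial Real
open scoped Nat

section Extrapolation

open Finset

lemma prod_erase_range_abs_natCast_sub (m j : ℕ) (hj : j ≤ m) :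
    ∏ i ∈ (range (m + 1)).erase j, |(j : ℝ) - i| = j ! * (m - j)! := by
  induction m, hj using Nat.le_induction with
  | base =>
    rw [range_add_one, erase_insert notMem_range_self, Nat.sub_self, Nat.factorial_zero,
      Nat.cast_one, mul_one, ← Nat.descFactorial_self, Nat.descFactorial_eq_prod_range,
      Nat.cast_prod]
    refine prod_congr rfl fun i hi => ?_
    rw [mem_range] at hi
    rw [Nat.cast_sub hi.le, abs_of_nonneg (by simp only [sub_nonneg, Nat.cast_le]; omega)]
  | succ m hjm ih =>
    rw [range_add_one, erase_insert_of_ne (by omega), prod_insert (by simp), ih,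
      Nat.sub_add_comm hjm, Nat.factorial_succ, abs_sub_comm,
      abs_of_nonneg (by simp only [sub_nonneg, Nat.cast_le]; omega)]
    push_cast [Nat.cast_sub hjm]
    ring

lemma sum_range_inv_factorial_mul_factorial (m : ℕ) :
    ∑ j ∈ range (m + 1), ((j ! * (m - j)! : ℝ))⁻¹ = 2 ^ m / m ! := by
  rw [eq_div_iff (by positivity), sum_mul]
  have hchoose : ∀ j ∈ range (m + 1), ((j ! * (m - j)! : ℝ))⁻¹ * m ! = m.choose j := by
    intro j hj
    rw [Nat.cast_choose ℝ (by simpa [Nat.lt_succ_iff] using hj)]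
    ring
  rw [sum_congr rfl hchoose, ← Nat.cast_sum, Nat.sum_range_choose]
  norm_num

lemma abs_eval_lagrange_basis_le_s8 (m j : ℕ) (hj : j ≤ m) {a δ t R : ℝ} (hδ : 0 < δ)
    (hR : ∀ i ≤ m, |t - (a + i * δ)| ≤ R) :
    |(Lagrange.basis (range (m + 1)) (fun i : ℕ => a + i * δ) j).eval t|
      ≤ R ^ m / (δ ^ m * (j ! * (m - j)!)) := by
  have hcard : ((range (m + 1)).erase j).card = m := by
    rw [card_erase_of_mem (mem_range.2 (by omega)), card_range, Nat.add_sub_cancel]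
  have hR0 : 0 ≤ R := (abs_nonneg _).trans (hR 0 (Nat.zero_le _))
  have hfactor : ∀ i ∈ (range (m + 1)).erase j,
      |(Lagrange.basisDivisor (a + j * δ) (a + i * δ)).eval t|
        ≤ R / (δ * |(j : ℝ) - i|) := by
    intro i hi
    obtain ⟨-, hi⟩ := mem_erase.1 hi
    rw [Lagrange.basisDivisor, eval_mul, eval_C, eval_sub, eval_X, eval_C, abs_mul, abs_inv,
      show a + j * δ - (a + i * δ) = δ * (j - i) by ring, abs_mul, abs_of_pos hδ,
      ← div_eq_inv_mul]
    exact div_le_div_of_nonneg_right (hR i (by simpa [Nat.lt_succ_iff] using hi)) (by positivity)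
  calc |(Lagrange.basis (range (m + 1)) (fun i : ℕ => a + i * δ) j).eval t|
      = ∏ i ∈ (range (m + 1)).erase j,
          |(Lagrange.basisDivisor (a + j * δ) (a + i * δ)).eval t| := by
        rw [Lagrange.basis, eval_prod, abs_prod]
    _ ≤ ∏ i ∈ (range (m + 1)).erase j, R / (δ * |(j : ℝ) - i|) :=
        prod_le_prod (fun _ _ => abs_nonneg _) hfactor
    _ = R ^ m / (δ ^ m * (j ! * (m - j)!)) := by
        rw [prod_div_distrib, prod_mul_distrib, prod_const, prod_const, hcard,
          prod_erase_range_abs_natCast_sub m j hj]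

lemma abs_eval_le_of_abs_eval_equally_spaced_le {Q : ℝ[X]} {m : ℕ} (hQ : Q.natDegree ≤ m)
    {a δ t R M : ℝ} (hδ : 0 < δ) (hR : ∀ i ≤ m, |t - (a + i * δ)| ≤ R)
    (hM : ∀ i ≤ m, |Q.eval (a + i * δ)| ≤ M) :
    |Q.eval t| ≤ M * (2 * R / δ) ^ m / m ! := by
  set v : ℕ → ℝ := fun i => a + i * δ
  have hv : Set.InjOn v (range (m + 1)) := fun i _ j _ hij => by
    simpa [v, hδ.ne'] using hij
  have hdeg : Q.degree < (range (m + 1)).card := by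
    rw [card_range]
    exact Q.degree_le_natDegree.trans_lt (by exact_mod_cast Nat.lt_succ_of_le hQ)
  have hM0 : 0 ≤ M := (abs_nonneg _).trans (hM 0 (Nat.zero_le _))
  calc |Q.eval t|
      = |∑ j ∈ range (m + 1), Q.eval (v j) * (Lagrange.basis (range (m + 1)) v j).eval t| := by
        conv_lhs => rw [Lagrange.eq_interpolate hv hdeg]
        simp only [Lagrange.interpolate_apply, eval_finsetSum, eval_mul, eval_C]
    _ ≤ ∑ j ∈ range (m + 1), M * (R ^ m / (δ ^ m * (j ! * (m - j)!))) := by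
        refine (abs_sum_le_sum_abs _ _).trans (sum_le_sum fun j hj => ?_)
        have hjm : j ≤ m := Nat.lt_succ_iff.1 (mem_range.1 hj)
        rw [abs_mul]
        exact mul_le_mul (hM j hjm) (abs_eval_lagrange_basis_le_s8 m j hjm hδ hR)
          (abs_nonneg _) hM0
    _ = M * R ^ m / δ ^ m * ∑ j ∈ range (m + 1), ((j ! * (m - j)! : ℝ))⁻¹ := by
        rw [mul_sum]
        exact sum_congr rfl fun j _ => by ring
    _ = M * (2 * R / δ) ^ m / m ! := by
        rw [sum_range_inv_factorial_mul_factorial]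
        ring

end Extrapolation

lemma eval_eq_zero_of_pow_mul_abs_eval_le {Q : ℝ[X]} {m N : ℕ} (hQ : Q.natDegree ≤ m)
    (hm : 0 < m) {t h : ℝ} (ht : 0 ≤ t) (hh : 0 < h)
    (hgain : (4 * exp 1) ^ m * t ^ N < (t + h) ^ N)
    (hmax : ∀ s ∈ Set.Icc (t + h) (t + 2 * h), s ^ N * |Q.eval s| ≤ t ^ N * |Q.eval t|) :
    Q.eval t = 0 := by
  have hδ : 0 < h / m := by positivity
  have hnode : ∀ i ≤ m, t + h + i * (h / m) ∈ Set.Icc (t + h) (t + 2 * h) := by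
    intro i hi
    have : (i : ℝ) * (h / m) ≤ h :=
      calc (i : ℝ) * (h / m) ≤ m * (h / m) := by gcongr
        _ = h := by field_simp
    constructor <;> nlinarith [show 0 ≤ (i : ℝ) * (h / m) by positivity]
  have hextrap := abs_eval_le_of_abs_eval_equally_spaced_le hQ (a := t + h) (t := t)
    (R := 2 * h) (M := t ^ N * |Q.eval t| / (t + h) ^ N) hδ
    (fun i hi => by
      obtain ⟨h1, h2⟩ := hnode i hi
      rw [abs_sub_comm, abs_of_nonneg (by linarith)]
      linarith)
    (fun i hi => by
      rw [le_div_iff₀ (by positivity), mul_comm]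
      exact (mul_le_mul_of_nonneg_right (pow_le_pow_left₀ (by positivity) (hnode i hi).1 N)
        (abs_nonneg _)).trans (hmax _ (hnode i hi)))
  -- `m ^ m / m ! ≤ e ^ m`, a term of the exponential series
  have hconst : (2 * (2 * h) / (h / m)) ^ m / (m ! : ℝ) ≤ (4 * exp 1) ^ m := by
    rw [show 2 * (2 * h) / (h / m) = 4 * m by field_simp; ring, mul_pow, mul_pow, mul_div_assoc,
      ← exp_nat_mul, mul_one]
    exact mul_le_mul_of_nonneg_left (pow_div_factorial_le_exp _ (Nat.cast_nonneg m) m)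
      (by positivity)
  by_contra hQt
  have hQt : 0 < |Q.eval t| := abs_pos.2 hQt
  have hbound : |Q.eval t| * (t + h) ^ N ≤ |Q.eval t| * ((4 * exp 1) ^ m * t ^ N) := by
    rw [← le_div_iff₀ (by positivity)]
    calc |Q.eval t| ≤ t ^ N * |Q.eval t| / (t + h) ^ N * ((2 * (2 * h) / (h / m)) ^ m / m !) := by
          rwa [← mul_div_assoc]
      _ ≤ t ^ N * |Q.eval t| / (t + h) ^ N * (4 * exp 1) ^ m := by gcongr
      _ = _ := by ring
  exact hbound.not_gt (mul_lt_mul_of_pos_left hgain hQt)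

lemma mul_pow_lt_add_pow {C t h : ℝ} {N : ℕ} (hC : C < (1 + h) ^ N) (ht0 : 0 ≤ t)
    (ht1 : t ≤ 1) (hh : 0 < h) : C * t ^ N < (t + h) ^ N := by
  rcases ht0.eq_or_lt with rfl | ht
  · rcases N with _ | N
    · simpa using hC
    · simpa using pow_pos hh (N + 1)
  · calc C * t ^ N < (1 + h) ^ N * t ^ N := mul_lt_mul_of_pos_right hC (pow_pos ht N)
      _ = (t + t * h) ^ N := by rw [← mul_pow]; ring
      _ ≤ (t + h) ^ N := by gcongr; nlinarith

lemma four_mul_exp_one_pow_lt_one_add_pow {m N : ℕ} {h : ℝ} (hm : 0 < m) (hh0 : 0 < h)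
    (hh : h ≤ 1 / 2) (hN : 5 * m ≤ N * h) : (4 * exp 1) ^ m < (1 + h) ^ N := by
  have hlog : 2 * h / 3 ≤ log (1 + h) := by
    refine le_trans ?_ (one_sub_inv_le_log_of_pos (by linarith))
    rw [show 1 - (1 + h)⁻¹ = h / (1 + h) by field_simp; ring, le_div_iff₀ (by linarith)]
    nlinarith
  have h4e : 4 * exp 1 < exp (10 / 3) := by
    have h2 : 2 < exp 1 := by linarith [add_one_lt_exp one_ne_zero]
    rw [show (10 / 3 : ℝ) = 1 + 1 + 4 / 3 by norm_num, exp_add, exp_add]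
    nlinarith [add_one_lt_exp (show (4 / 3 : ℝ) ≠ 0 by norm_num)]
  calc (4 * exp 1) ^ m < exp (10 / 3) ^ m := by gcongr
    _ = exp (m * (10 / 3)) := (exp_nat_mul _ m).symm
    _ ≤ exp (N * log (1 + h)) := exp_le_exp.2 (by nlinarith)
    _ = (1 + h) ^ N := by rw [exp_nat_mul, exp_log (by linarith)]

lemma natDegree_one_sub_X_mul_comp_one_sub_X_sq_le {V : ℝ[X]} {k : ℕ} (hV : V.natDegree ≤ k) :
    ((1 - X) * (V.comp (1 - X)) ^ 2).natDegree ≤ 2 * k + 1 := by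
  have h1 : (1 - X : ℝ[X]).natDegree = 1 := by
    rw [natDegree_sub_eq_right_of_natDegree_lt] <;> simp
  have h2 : (V.comp (1 - X)).natDegree ≤ k :=
    natDegree_comp_le.trans (by rw [h1, mul_one]; exact hV)
  have h3 : ((V.comp (1 - X)) ^ 2).natDegree ≤ 2 * k :=
    natDegree_pow_le.trans (Nat.mul_le_mul_left 2 h2)
  calc ((1 - X) * (V.comp (1 - X)) ^ 2).natDegree
      ≤ (1 - X : ℝ[X]).natDegree + ((V.comp (1 - X)) ^ 2).natDegree := natDegree_mul_le
    _ ≤ 2 * k + 1 := by omega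

lemma pow_mul_abs_eval_eq_sq_sqrt_mul_abs_eval (V : ℝ[X]) (d : ℕ) {s : ℝ} (hs : s ≤ 1) :
    s ^ (2 * d) * |((1 - X) * (V.comp (1 - X)) ^ 2).eval s|
      = (√(1 - s) * |((1 - X) ^ d * V).eval (1 - s)|) ^ 2 := by
  have h1s : 0 ≤ 1 - s := by linarith
  simp only [eval_mul, eval_pow, eval_sub, eval_one, eval_X, eval_comp, mul_pow, sq_abs,
    sq_sqrt h1s, abs_mul, abs_of_nonneg h1s, abs_sq]
  ring

lemma eval_eq_zero_of_forall_sqrt_mul_abs_eval_le {n k : ℕ} (hkn : 2 * k ≤ n) {V : ℝ[X]}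
    (hV : V.natDegree ≤ k) {y : ℝ} (hny : 10 * (2 * k + 1) ≤ n * y) (hy1 : y ≤ 1)
    (hmax : ∀ u ∈ Set.Icc 0 y,
      √u * |((1 - X) ^ (n - k) * V).eval u| ≤ √y * |((1 - X) ^ (n - k) * V).eval y|) :
    ((1 - X) ^ (n - k) * V).eval y = 0 := by
  have hy : 0 < y := by
    by_contra! hy
    nlinarith [mul_nonpos_of_nonneg_of_nonpos (Nat.cast_nonneg n) hy]
  have hgain : 5 * (2 * k + 1 : ℕ) ≤ (2 * (n - k) : ℕ) * (y / 2) := by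
    have hkn' : (2 * k : ℝ) ≤ n := by exact_mod_cast hkn
    push_cast [Nat.cast_sub (by omega : k ≤ n)]
    nlinarith
  have hQ := eval_eq_zero_of_pow_mul_abs_eval_le (natDegree_one_sub_X_mul_comp_one_sub_X_sq_le hV)
    (by omega) (by linarith : 0 ≤ 1 - y) (half_pos hy)
    (mul_pow_lt_add_pow (four_mul_exp_one_pow_lt_one_add_pow (by omega) (half_pos hy)
      (by linarith) hgain) (by linarith) (by linarith) (half_pos hy))
    (fun s hs => by
      rw [pow_mul_abs_eval_eq_sq_sqrt_mul_abs_eval V _ (by linarith [hs.2]),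
        pow_mul_abs_eval_eq_sq_sqrt_mul_abs_eval V _ (by linarith), sub_sub_cancel]
      exact pow_le_pow_left₀ (by positivity)
        (hmax _ ⟨by linarith [hs.2], by linarith [hs.1]⟩) 2)
  have hVy : V.eval y = 0 := by simpa [hy.ne'] using hQ
  simp [hVy]

open Set

theorem weighted_decay (n k : ℕ) (hk : 1 ≤ k) (hkn : 2 * k ≤ n)
    (V : Polynomial ℝ) (hV : V.natDegree ≤ k)
    (hW : ((1 - X) ^ (n - k) * V : Polynomial ℝ) ≠ 0) :
    ∀ y ∈ Icc (10 * (2 * (k:ℝ) + 1) / (n:ℝ)) 1,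
      Real.sqrt y * |((1 - X) ^ (n - k) * V : Polynomial ℝ).eval y| <
        ⨆ u : Icc (0:ℝ) 1,
          Real.sqrt (u : ℝ) * |((1 - X) ^ (n - k) * V : Polynomial ℝ).eval (u : ℝ)| := by
  rintro y ⟨hy_lower, hy1⟩
  set W : ℝ[X] := (1 - X) ^ (n - k) * V
  set g : ℝ → ℝ := fun u => √u * |W.eval u|
  have hn : (0 : ℝ) < n := by exact_mod_cast (by omega : 0 < n)
  have hbdd : BddAbove (range fun u : Icc (0 : ℝ) 1 => g u) :=
    (isCompact_range (by fun_prop)).bddAbove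
  by_contra hle
  have hmax : ∀ u ∈ Icc (0 : ℝ) 1, g u ≤ g y :=
    fun u hu => (le_ciSup hbdd ⟨u, hu⟩).trans (not_lt.1 hle)
  have hWy : W.eval y = 0 := eval_eq_zero_of_forall_sqrt_mul_abs_eval_le hkn hV
    ((div_le_iff₀' hn).1 hy_lower) hy1 fun u hu => hmax u ⟨hu.1, hu.2.trans hy1⟩
  refine hW (eq_zero_of_infinite_isRoot W ((Ioc_infinite zero_lt_one).mono fun u hu => ?_))
  have hgu : √u * |W.eval u| ≤ √u * 0 := by
    simpa [g, hWy] using hmax u (Ioc_subset_Icc_self hu)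
  exact abs_nonpos_iff.1 (le_of_mul_le_mul_left hgu (sqrt_pos.2 hu.1))
end

section
/- For x ∈ [0,1] and integers 1 ≤ k ≤ n-1 with x ≤ 1 - 10k/(n-k), and for any real polynomial R of degree at most k, the polynomial S(x) = x^{n-k}R(x) satisfies |S(x)|² ≤ x^{n-k}·‖S‖_{[0,1]}², that is, |S(x)| ≤ x^{(n-k)/2}‖S‖_{[0,1]}. -/
open Polynomial Set

lemma aux_log_ineq' {s t : ℝ} (hs : 0 ≤ s) (hst : s ≤ t / 2) (ht : t < 1) :
    t / 2 - s ≤ Real.log (1 - s) - Real.log (1 - t) / 2 := by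
  have ht0 : 0 ≤ t := by linarith
  have h1t : 0 < 1 - t := by linarith
  have h1t2 : 0 < 1 - t / 2 := by linarith
  have h1s : 0 < 1 - s := by linarith
  -- Step 1 : -log(1-s) - s ≤ -log(1-t/2) - t/2
  have step1 : Real.log (1 - t / 2) - Real.log (1 - s) ≤ s - t / 2 := by
    have h := Real.log_le_sub_one_of_pos (x := (1 - t / 2) / (1 - s)) (by positivity)
    rw [Real.log_div (by linarith) (by linarith)] at h
    have h2 : (1 - t / 2) / (1 - s) - 1 = (s - t / 2) / (1 - s) := by
      field_simp
      ring
    rw [h2] at h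
    have h3 : (s - t / 2) / (1 - s) ≤ s - t / 2 := by
      rw [div_le_iff₀ h1s]
      nlinarith
    linarith
  -- Step 2 : log(1-t) ≤ 2 log(1-t/2)
  have step2 : Real.log (1 - t) ≤ 2 * Real.log (1 - t / 2) := by
    have h1 : (1 - t : ℝ) ≤ (1 - t / 2) ^ 2 := by nlinarith
    have h2 := Real.log_le_log h1t h1
    rwa [Real.log_pow, Nat.cast_ofNat] at h2
  linarith

lemma aux_prod_nodes' (k j : ℕ) (hj : j ≤ k) :
    ∏ i ∈ (Finset.range (k + 1)).erase j, |(j : ℝ) - (i : ℝ)| =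
      ((j.factorial * (k - j).factorial : ℕ) : ℝ) := by
  have hsplit : (Finset.range (k + 1)).erase j =
      Finset.range j ∪ Finset.Ico (j + 1) (k + 1) := by
    ext i
    simp only [Finset.mem_erase, Finset.mem_range, Finset.mem_union, Finset.mem_Ico]
    omega
  have hdisj : Disjoint (Finset.range j) (Finset.Ico (j + 1) (k + 1)) := by
    simp only [Finset.disjoint_left, Finset.mem_range, Finset.mem_Ico]
    omega
  rw [hsplit, Finset.prod_union hdisj]
  have h1 : ∏ i ∈ Finset.range j, |(j : ℝ) - (i : ℝ)| = (j.factorial : ℝ) := by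
    have e1 : ∀ i ∈ Finset.range j, |(j : ℝ) - (i : ℝ)| = ((j - i : ℕ) : ℝ) := by
      intro i hi
      have hij : i ≤ j := (Finset.mem_range.mp hi).le
      rw [Nat.cast_sub hij, abs_of_nonneg (by
        have : (i : ℝ) ≤ j := by exact_mod_cast hij
        linarith)]
    rw [Finset.prod_congr rfl e1, ← Nat.cast_prod]
    norm_cast
    have e2 : ∏ i ∈ Finset.range j, (j - i) = ∏ i ∈ Finset.range j, (i + 1) := by
      rw [← Finset.prod_range_reflect (fun i => i + 1) j]
      exact Finset.prod_congr rfl fun i hi => by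
        have := Finset.mem_range.mp hi; omega
    rw [e2, Finset.prod_range_add_one_eq_factorial]
  have h2 : ∏ i ∈ Finset.Ico (j + 1) (k + 1), |(j : ℝ) - (i : ℝ)| =
      ((k - j).factorial : ℝ) := by
    have e1 : ∀ i ∈ Finset.Ico (j + 1) (k + 1), |(j : ℝ) - (i : ℝ)| = ((i - j : ℕ) : ℝ) := by
      intro i hi
      have hij : j ≤ i := by have := (Finset.mem_Ico.mp hi).1; omega
      rw [abs_sub_comm, Nat.cast_sub hij, abs_of_nonneg (by
        have : (j : ℝ) ≤ i := by exact_mod_cast hij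
        linarith)]
    rw [Finset.prod_congr rfl e1, ← Nat.cast_prod]
    norm_cast
    rw [Finset.prod_Ico_eq_prod_range]
    have e2 : ∏ i ∈ Finset.range (k + 1 - (j + 1)), (j + 1 + i - j) =
        ∏ i ∈ Finset.range (k - j), (i + 1) := by
      have hr : k + 1 - (j + 1) = k - j := by omega
      rw [hr]
      exact Finset.prod_congr rfl fun i _ => by omega
    rw [e2, Finset.prod_range_add_one_eq_factorial]
  rw [h1, h2]
  push_cast
  ring

lemma aux_const' : Real.exp (-2) * (5 * (1 + Real.exp (-2))) ≤ 1 := by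
  have he : (2.7182818283 : ℝ) < Real.exp 1 := Real.exp_one_gt_d9
  have h1 : Real.exp 2 = (Real.exp 1) ^ 2 := by
    rw [← Real.exp_nat_mul]; norm_num
  have h2 : Real.exp (-2) = ((Real.exp 1) ^ 2)⁻¹ := by
    rw [Real.exp_neg, h1]
  rw [h2]
  have hE : (0:ℝ) < (Real.exp 1) ^ 2 := by positivity
  rw [inv_eq_one_div]
  rw [div_mul_eq_mul_div, div_le_one hE]
  have h3 : (7.389 : ℝ) ≤ (Real.exp 1) ^ 2 := by nlinarith
  have h4 : 1 / (Real.exp 1) ^ 2 ≤ 0.14 := by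
    rw [div_le_iff₀ hE]; linarith
  nlinarith

set_option maxHeartbeats 1600000 in
theorem incomplete_decay' (n k : ℕ) (hk : 1 ≤ k) (hkn : k ≤ n - 1) (hn : 1 ≤ n)
    (R : Polynomial ℝ) (hR : R.natDegree ≤ k) (x : ℝ) (hx0 : 0 ≤ x)
    (hx1 : x ≤ 1 - 10 * (k:ℝ) / ((n:ℝ) - (k:ℝ))) :
    |((X ^ (n - k) * R : Polynomial ℝ)).eval x| ≤
      x ^ (((n:ℝ) - (k:ℝ)) / 2) *
        ⨆ u : Icc (0:ℝ) 1, |((X ^ (n - k) * R : Polynomial ℝ)).eval (u : ℝ)| := by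
  set m := n - k with hmdef
  clear_value m
  have hm1 : 1 ≤ m := by omega
  have hmc : ((m : ℕ) : ℝ) = (n : ℝ) - (k : ℝ) := by
    rw [hmdef, Nat.cast_sub (by omega : k ≤ n)]
  rw [← hmc] at hx1 ⊢
  set M := ⨆ u : Icc (0:ℝ) 1, |((X ^ m * R : Polynomial ℝ)).eval (u : ℝ)| with hMdef
  clear_value M
  -- boundedness of the sup
  have hbdd : BddAbove (Set.range fun u : Icc (0:ℝ) 1 =>
      |((X ^ m * R : Polynomial ℝ)).eval (u : ℝ)|) := by
    obtain ⟨C, hC⟩ := (isCompact_Icc.image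
      (Polynomial.continuous (X ^ m * R : Polynomial ℝ)).abs).bddAbove
    refine ⟨C, ?_⟩
    rintro y ⟨⟨z, hz⟩, rfl⟩
    exact hC ⟨z, hz, rfl⟩
  have hMle : ∀ z : ℝ, z ∈ Icc (0:ℝ) 1 → |((X ^ m * R : Polynomial ℝ)).eval z| ≤ M :=
    fun z hz => by rw [hMdef]; exact le_ciSup hbdd ⟨z, hz⟩
  have hM0 : 0 ≤ M := (abs_nonneg _).trans (hMle 1 ⟨zero_le_one, le_refl 1⟩)
  -- numeric facts
  have hk0 : (0:ℝ) < k := by exact_mod_cast hk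
  have hm0 : (0:ℝ) < m := by exact_mod_cast hm1
  rcases hx0.eq_or_lt with h0 | hxpos
  · -- x = 0
    rw [← h0]
    have : ((X ^ m * R : Polynomial ℝ)).eval 0 = 0 := by
      rw [eval_mul, eval_pow, eval_X, zero_pow (by omega : m ≠ 0), zero_mul]
    rw [this, abs_zero]
    exact mul_nonneg (Real.rpow_nonneg le_rfl _) hM0
  -- main case
  set t := 1 - x with htdef
  clear_value t
  have ht10 : 10 * (k:ℝ) ≤ (m:ℝ) * t := by
    have h1 : 10 * (k:ℝ) / (m:ℝ) ≤ t := by rw [htdef]; linarith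
    calc 10 * (k:ℝ) = 10 * (k:ℝ) / (m:ℝ) * m := by field_simp
      _ ≤ t * m := mul_le_mul_of_nonneg_right h1 hm0.le
      _ = (m:ℝ) * t := mul_comm _ _
  have ht0 : 0 < t := by
    have : (0:ℝ) < 10 * k := by linarith
    nlinarith
  have ht1 : t < 1 := by rw [htdef]; linarith
  have hxeq : x = 1 - t := by rw [htdef]; ring
  -- nodes
  set u : ℕ → ℝ := fun j => 1 - t * ((k:ℝ) - (j:ℝ)) / (5 * (k:ℝ)) with hu_def
  clear_value u
  have hu_eval : ∀ j : ℕ, u j = 1 - t * ((k:ℝ) - (j:ℝ)) / (5 * (k:ℝ)) := fun j => by rw [hu_def]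
  have h5k : (0:ℝ) < 5 * k := by linarith
  have hu_le1 : ∀ j, j ≤ k → u j ≤ 1 := by
    intro j hj
    have hjk : (j:ℝ) ≤ k := by exact_mod_cast hj
    have : 0 ≤ t * ((k:ℝ) - j) / (5 * k) := by
      apply div_nonneg (mul_nonneg ht0.le (by linarith)) h5k.le
    rw [hu_eval]; linarith
  have hu_pos : ∀ j, j ≤ k → 0 < u j := by
    intro j hj
    have hjk : (0:ℝ) ≤ j := by positivity
    have : t * ((k:ℝ) - j) / (5 * k) < 1 := by
      rw [div_lt_one h5k]; nlinarith
    rw [hu_eval]; linarith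
  have hu_gtx : ∀ j, j ≤ k → x < u j := by
    intro j hj
    have hjk : (0:ℝ) ≤ j := by positivity
    have : t * ((k:ℝ) - j) / (5 * k) < t := by
      rw [div_lt_iff₀ h5k]; nlinarith
    rw [hu_eval, hxeq]; linarith
  -- injectivity
  have hinj : Set.InjOn u ↑(Finset.range (k + 1)) := by
    intro a _ b _ hab
    rw [hu_eval, hu_eval] at hab
    have e1 : t * ((k:ℝ) - a) / (5 * k) = t * ((k:ℝ) - b) / (5 * k) := by linarith
    have e2 : t * ((k:ℝ) - a) = t * ((k:ℝ) - b) := by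
      have := congrArg (fun z : ℝ => z * (5 * (k:ℝ))) e1
      simpa [div_mul_cancel₀, ne_of_gt h5k] using this
    have e3 : (a:ℝ) = b := by
      have := mul_left_cancel₀ (ne_of_gt ht0) e2
      linarith
    exact_mod_cast e3
  -- Lagrange interpolation
  have hdeg : R.degree < (Finset.range (k + 1)).card := by
    rw [Finset.card_range]
    exact lt_of_le_of_lt Polynomial.degree_le_natDegree
      (by exact_mod_cast Nat.lt_succ_of_le hR)
  have hRx : R.eval x = ∑ j ∈ Finset.range (k + 1),
      R.eval (u j) * (Lagrange.basis (Finset.range (k + 1)) u j).eval x := by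
    conv_lhs => rw [Lagrange.eq_interpolate hinj hdeg]
    rw [Lagrange.interpolate_apply, Polynomial.eval_finset_sum]
    exact Finset.sum_congr rfl fun j _ => by rw [Polynomial.eval_mul, Polynomial.eval_C]
  -- basis bound
  have hbasis : ∀ j ∈ Finset.range (k + 1),
      |(Lagrange.basis (Finset.range (k + 1)) u j).eval x| ≤
        (5 * (k:ℝ)) ^ k / ((j.factorial * (k - j).factorial : ℕ) : ℝ) := by
    intro j hj
    have hjk : j ≤ k := Nat.lt_succ_iff.mp (Finset.mem_range.mp hj)
    have hcard : ((Finset.range (k + 1)).erase j).card = k := by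
      rw [Finset.card_erase_of_mem hj, Finset.card_range]
      omega
    rw [Lagrange.basis, Polynomial.eval_prod, Finset.abs_prod]
    have hstep : ∀ i ∈ (Finset.range (k + 1)).erase j,
        |Polynomial.eval x (Lagrange.basisDivisor (u j) (u i))| ≤
          5 * (k:ℝ) / |(j:ℝ) - (i:ℝ)| := by
      intro i hi
      obtain ⟨hij, hir⟩ := Finset.mem_erase.mp hi
      have hik : i ≤ k := Nat.lt_succ_iff.mp (Finset.mem_range.mp hir)
      have hA : (0:ℝ) < |(j:ℝ) - (i:ℝ)| := by
        rw [abs_pos, sub_ne_zero]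
        exact_mod_cast (Ne.symm hij)
      have heval : Polynomial.eval x (Lagrange.basisDivisor (u j) (u i)) =
          (u j - u i)⁻¹ * (x - u i) := by
        simp [Lagrange.basisDivisor]
      have hd : |u j - u i| = t * |(j:ℝ) - (i:ℝ)| / (5 * k) := by
        have e : u j - u i = t * ((j:ℝ) - (i:ℝ)) / (5 * k) := by
          rw [hu_eval, hu_eval]; field_simp; ring
        rw [e, abs_div, abs_mul, abs_of_pos ht0, abs_of_pos h5k]
      have hnum : |x - u i| ≤ t := by
        rw [abs_of_nonpos (by linarith [hu_gtx i hik] : x - u i ≤ 0)]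
        have := hu_le1 i hik
        rw [hxeq]; linarith
      have hB0 : (0:ℝ) ≤ |x - u i| := abs_nonneg _
      have htA : (0:ℝ) < t * |(j:ℝ) - (i:ℝ)| := mul_pos ht0 hA
      rw [heval, abs_mul, abs_inv, hd, inv_div, div_mul_eq_mul_div,
        div_le_div_iff₀ htA hA]
      nlinarith [mul_nonneg (mul_nonneg h5k.le hA.le) (sub_nonneg.mpr hnum)]
    calc (∏ i ∈ (Finset.range (k + 1)).erase j,
          |Polynomial.eval x (Lagrange.basisDivisor (u j) (u i))|)
        ≤ ∏ i ∈ (Finset.range (k + 1)).erase j, 5 * (k:ℝ) / |(j:ℝ) - (i:ℝ)| :=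
          Finset.prod_le_prod (fun i _ => abs_nonneg _) hstep
      _ = (5 * (k:ℝ)) ^ k / ∏ i ∈ (Finset.range (k + 1)).erase j, |(j:ℝ) - (i:ℝ)| := by
          rw [Finset.prod_div_distrib, Finset.prod_const, hcard]
      _ = (5 * (k:ℝ)) ^ k / ((j.factorial * (k - j).factorial : ℕ) : ℝ) := by
          rw [aux_prod_nodes' k j hjk]
  -- weight bound
  have hweight : ∀ j, j ≤ k →
      x ^ ((m:ℝ) / 2) / (u j) ^ m ≤ Real.exp (-(3 * (k:ℝ) + 2 * (j:ℝ))) := by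
    intro j hjk
    clear hRx hbasis hinj hdeg hbdd hMle hM0 hMdef hR hx1 hu_le1 hu_gtx
    have hjkR : (j:ℝ) ≤ k := by exact_mod_cast hjk
    have hj0 : (0:ℝ) ≤ j := by positivity
    set s := t * ((k:ℝ) - (j:ℝ)) / (5 * (k:ℝ)) with hsdef
    clear_value s
    have hs0 : 0 ≤ s := by
      rw [hsdef]
      exact div_nonneg (mul_nonneg ht0.le (by linarith : (0:ℝ) ≤ (k:ℝ) - (j:ℝ))) h5k.le
    have hs2 : s ≤ t / 2 := by
      rw [hsdef, div_le_div_iff₀ h5k (by norm_num : (0:ℝ) < 2)]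
      nlinarith
    have hlog := aux_log_ineq' hs0 hs2 ht1
    have hueq : u j = 1 - s := by rw [hu_eval, hsdef]
    have hupos : 0 < u j := hu_pos j hjk
    have h1 : t / 2 - s = t * (3 * (k:ℝ) + 2 * j) / (10 * k) := by
      rw [hsdef]; field_simp; ring
    have h2 : (3 * (k:ℝ) + 2 * j) ≤ (m:ℝ) * (t / 2 - s) := by
      rw [h1]
      have e : (m:ℝ) * (t * (3 * (k:ℝ) + 2 * j) / (10 * k)) =
          (m:ℝ) * t * (3 * (k:ℝ) + 2 * j) / (10 * k) := by ring
      rw [e, le_div_iff₀ (by linarith : (0:ℝ) < 10 * k)]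
      nlinarith
    have h3 : t / 2 - s ≤ Real.log (u j) - Real.log x / 2 := by
      rw [hueq, hxeq]; exact hlog
    have h4 : (m:ℝ) * (t / 2 - s) ≤ (m:ℝ) * (Real.log (u j) - Real.log x / 2) :=
      mul_le_mul_of_nonneg_left h3 hm0.le
    have h5 : (m:ℝ) * (Real.log (u j) - Real.log x / 2) =
        (m:ℝ) * Real.log (u j) - (m:ℝ) / 2 * Real.log x := by ring
    have e1 : x ^ ((m:ℝ) / 2) = Real.exp ((m:ℝ) / 2 * Real.log x) := by
      rw [Real.rpow_def_of_pos hxpos, mul_comm]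
    have e2 : (u j) ^ m = Real.exp ((m:ℝ) * Real.log (u j)) := by
      rw [← Real.exp_log (pow_pos hupos m), Real.log_pow]
    rw [e1, e2, ← Real.exp_sub, Real.exp_le_exp]
    rw [h5] at h4
    linarith
  -- sum bound
  have hsum : ∑ j ∈ Finset.range (k + 1),
      (5 * (k:ℝ)) ^ k / ((j.factorial * (k - j).factorial : ℕ) : ℝ) *
        Real.exp (-(3 * (k:ℝ) + 2 * (j:ℝ))) ≤ 1 := by
    have hterm : ∀ j ∈ Finset.range (k + 1),
        (5 * (k:ℝ)) ^ k / ((j.factorial * (k - j).factorial : ℕ) : ℝ) *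
          Real.exp (-(3 * (k:ℝ) + 2 * (j:ℝ))) =
        (5 * (k:ℝ)) ^ k * Real.exp (-(3 * (k:ℝ))) / (k.factorial : ℝ) *
          ((k.choose j : ℝ) * Real.exp (-2) ^ j) := by
      intro j hj
      have hjk : j ≤ k := Nat.lt_succ_iff.mp (Finset.mem_range.mp hj)
      have hfact : (k.factorial : ℝ) =
          (k.choose j : ℝ) * ((j.factorial * (k - j).factorial : ℕ) : ℝ) := by
        have hN : k.choose j * (j.factorial * (k - j).factorial) = k.factorial := by
          rw [← mul_assoc]; exact Nat.choose_mul_factorial_mul_factorial hjk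
        exact_mod_cast congrArg (Nat.cast (R := ℝ)) hN.symm
      have hexp : Real.exp (-(3 * (k:ℝ) + 2 * (j:ℝ))) =
          Real.exp (-(3 * (k:ℝ))) * Real.exp (-2) ^ j := by
        rw [← Real.exp_nat_mul, ← Real.exp_add]
        ring_nf
      have hfac0 : ((j.factorial * (k - j).factorial : ℕ) : ℝ) ≠ 0 := by
        positivity
      have hkfac0 : (k.factorial : ℝ) ≠ 0 := by positivity
      have hch : (0:ℝ) < (k.choose j : ℝ) := by
        exact_mod_cast Nat.choose_pos hjk
      rw [hexp, hfact]
      field_simp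
    rw [Finset.sum_congr rfl hterm, ← Finset.mul_sum]
    have hbinom : ∑ j ∈ Finset.range (k + 1), ((k.choose j : ℝ) * Real.exp (-2) ^ j) =
        (Real.exp (-2) + 1) ^ k := by
      rw [add_pow]
      exact Finset.sum_congr rfl fun j _ => by rw [one_pow]; ring
    rw [hbinom]
    -- reduce to the key real estimate
    have hkfac : (0:ℝ) < (k.factorial : ℝ) := by positivity
    rw [div_mul_eq_mul_div, div_le_one hkfac]
    have hkk : ((k:ℝ)) ^ k ≤ (k.factorial : ℝ) * Real.exp 1 ^ k := by
      have h := Real.pow_div_factorial_le_exp (x := (k:ℝ)) (Nat.cast_nonneg k) k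
      rw [div_le_iff₀ hkfac] at h
      have he : Real.exp (k:ℝ) = Real.exp 1 ^ k := by
        rw [← Real.exp_nat_mul, mul_one]
      rw [he] at h
      linarith [h]
    have he3 : Real.exp (-(3 * (k:ℝ))) = Real.exp (-3) ^ k := by
      rw [← Real.exp_nat_mul]
      ring_nf
    have hbase0 : (0:ℝ) ≤ Real.exp 1 * (5 * Real.exp (-3) * (Real.exp (-2) + 1)) := by
      positivity
    have hbase1 : Real.exp 1 * (5 * Real.exp (-3) * (Real.exp (-2) + 1)) ≤ 1 := by
      have hb : Real.exp 1 * (5 * Real.exp (-3) * (Real.exp (-2) + 1)) =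
          Real.exp (-2) * (5 * (1 + Real.exp (-2))) := by
        have h13 : Real.exp 1 * Real.exp (-3) = Real.exp (-2) := by
          rw [← Real.exp_add]; norm_num
        calc Real.exp 1 * (5 * Real.exp (-3) * (Real.exp (-2) + 1))
            = Real.exp 1 * Real.exp (-3) * (5 * (Real.exp (-2) + 1)) := by ring
          _ = Real.exp (-2) * (5 * (1 + Real.exp (-2))) := by rw [h13]; ring
      rw [hb]
      exact aux_const'
    calc (5 * (k:ℝ)) ^ k * Real.exp (-(3 * (k:ℝ))) * (Real.exp (-2) + 1) ^ k
        = (k:ℝ) ^ k * ((5 * Real.exp (-3) * (Real.exp (-2) + 1)) ^ k) := by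
          rw [he3, ← mul_pow, ← mul_pow, ← mul_pow]
          congr 1
          ring
      _ ≤ (k.factorial : ℝ) * Real.exp 1 ^ k * ((5 * Real.exp (-3) * (Real.exp (-2) + 1)) ^ k) := by
          apply mul_le_mul_of_nonneg_right hkk
          positivity
      _ = (k.factorial : ℝ) * ((Real.exp 1 * (5 * Real.exp (-3) * (Real.exp (-2) + 1))) ^ k) := by
          rw [mul_assoc, ← mul_pow]
      _ ≤ (k.factorial : ℝ) * 1 := by
          apply mul_le_mul_of_nonneg_left _ hkfac.le
          exact pow_le_one₀ hbase0 hbase1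
      _ = (k.factorial : ℝ) := mul_one _
  -- final assembly
  have hxm : x ^ m = x ^ ((m:ℝ) / 2) * x ^ ((m:ℝ) / 2) := by
    rw [← Real.rpow_natCast x m, ← Real.rpow_add hxpos]
    norm_num
  have hRxb : |R.eval x| ≤ ∑ j ∈ Finset.range (k + 1),
      M / (u j) ^ m * ((5 * (k:ℝ)) ^ k / ((j.factorial * (k - j).factorial : ℕ) : ℝ)) := by
    rw [hRx]
    refine le_trans (Finset.abs_sum_le_sum_abs _ _) (Finset.sum_le_sum ?_)
    intro j hj
    have hjk : j ≤ k := Nat.lt_succ_iff.mp (Finset.mem_range.mp hj)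
    have hup := hu_pos j hjk
    have hpow : (0:ℝ) < (u j) ^ m := pow_pos hup m
    rw [abs_mul]
    have h1 : |R.eval (u j)| * (u j) ^ m = |((X ^ m * R : Polynomial ℝ)).eval (u j)| := by
      rw [eval_mul, eval_pow, eval_X, abs_mul, abs_pow, abs_of_pos hup]
      ring
    have h2 : |((X ^ m * R : Polynomial ℝ)).eval (u j)| ≤ M :=
      hMle (u j) ⟨hup.le, hu_le1 j hjk⟩
    have h3 : |R.eval (u j)| ≤ M / (u j) ^ m := by
      rw [le_div_iff₀ hpow, h1]
      exact h2
    exact mul_le_mul h3 (hbasis j hj) (abs_nonneg _) (div_nonneg hM0 hpow.le)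
  have hrpnn : (0:ℝ) ≤ x ^ ((m:ℝ) / 2) := Real.rpow_nonneg hxpos.le _
  calc |((X ^ m * R : Polynomial ℝ)).eval x| = x ^ m * |R.eval x| := by
        rw [eval_mul, eval_pow, eval_X, abs_mul, abs_pow, abs_of_pos hxpos]
    _ ≤ x ^ m * ∑ j ∈ Finset.range (k + 1),
        M / (u j) ^ m * ((5 * (k:ℝ)) ^ k / ((j.factorial * (k - j).factorial : ℕ) : ℝ)) := by
      apply mul_le_mul_of_nonneg_left hRxb (by positivity)
    _ = x ^ ((m:ℝ) / 2) * M * ∑ j ∈ Finset.range (k + 1),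
        (x ^ ((m:ℝ) / 2) / (u j) ^ m *
          ((5 * (k:ℝ)) ^ k / ((j.factorial * (k - j).factorial : ℕ) : ℝ))) := by
      rw [Finset.mul_sum, Finset.mul_sum]
      refine Finset.sum_congr rfl fun j hj => ?_
      rw [hxm]
      ring
    _ ≤ x ^ ((m:ℝ) / 2) * M * ∑ j ∈ Finset.range (k + 1),
        ((5 * (k:ℝ)) ^ k / ((j.factorial * (k - j).factorial : ℕ) : ℝ) *
          Real.exp (-(3 * (k:ℝ) + 2 * (j:ℝ)))) := by
      apply mul_le_mul_of_nonneg_left _ (mul_nonneg hrpnn hM0)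
      refine Finset.sum_le_sum fun j hj => ?_
      have hjk : j ≤ k := Nat.lt_succ_iff.mp (Finset.mem_range.mp hj)
      have hc : (0:ℝ) ≤ (5 * (k:ℝ)) ^ k / ((j.factorial * (k - j).factorial : ℕ) : ℝ) := by
        positivity
      calc x ^ ((m:ℝ) / 2) / (u j) ^ m *
            ((5 * (k:ℝ)) ^ k / ((j.factorial * (k - j).factorial : ℕ) : ℝ))
          ≤ Real.exp (-(3 * (k:ℝ) + 2 * (j:ℝ))) *
            ((5 * (k:ℝ)) ^ k / ((j.factorial * (k - j).factorial : ℕ) : ℝ)) :=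
            mul_le_mul_of_nonneg_right (hweight j hjk) hc
        _ = (5 * (k:ℝ)) ^ k / ((j.factorial * (k - j).factorial : ℕ) : ℝ) *
            Real.exp (-(3 * (k:ℝ) + 2 * (j:ℝ))) := mul_comm _ _
    _ ≤ x ^ ((m:ℝ) / 2) * M * 1 := by
      apply mul_le_mul_of_nonneg_left hsum (mul_nonneg hrpnn hM0)
    _ = x ^ ((m:ℝ) / 2) * M := mul_one _
end
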